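/- arXiv:1605.06222 — 3 statements merged into one kernel-verified Lean document; each statement's English description precedes it below -/
import Mathlib

section
/- Let Γ be a finite group, K a Γ-simplicial complex and L an induced Γ-subcomplex of K. If K strongly Γ-collapses to L, then the face poset FK strongly Γ-collapses to FL. -/
/-- An abstract simplicial complex on the vertex type `V`: a family of finite subsets of `V`
closed under taking subsets. -/
structure Cplx (V : Type*) where
  faces : Set (Set V)
  finite_mem : ∀ σ ∈ faces, Set.Finite σ
  down_closed : ∀ σ ∈ faces, ∀ τ ⊆ σ, τ ∈ faces

/-- The vertex set of a simplicial complex. -/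
def Cplx.verts {V : Type*} (K : Cplx V) : Set V := {v | ({v} : Set V) ∈ K.faces}

/-- `a` is an action of the group `Γ` on the vertex type of `K` by simplicial automorphisms. -/
def IsCplxAction (Γ : Type*) [Group Γ] {V : Type*} (a : Γ → V → V) (K : Cplx V) : Prop :=
  (∀ v, a 1 v = v) ∧ (∀ γ γ' : Γ, ∀ v, a (γ * γ') v = a γ (a γ' v)) ∧
    ∀ γ : Γ, ∀ σ ∈ K.faces, (a γ) '' σ ∈ K.faces

/-- A simplicial multi-map from `K` to `L`: it assigns to each vertex of `K` a nonempty subset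
of the vertices of `L`, so that `⋃ v ∈ σ, η v` is a simplex of `L` for every simplex `σ` of
`K`. -/
def IsMultiMap {V W : Type*} (K : Cplx V) (L : Cplx W) (η : V → Set W) : Prop :=
  (∀ v ∈ K.verts, (η v).Nonempty) ∧ ∀ σ ∈ K.faces, (⋃ v ∈ σ, η v) ∈ L.faces

/-- A Γ-equivariant simplicial multi-map, i.e. an element of `Map_Γ(K, L)`. -/
def IsEquivMultiMap (Γ : Type*) [Group Γ] {V W : Type*} (a : Γ → V → V) (b : Γ → W → W)
    (K : Cplx V) (L : Cplx W) (η : V → Set W) : Prop :=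
  IsMultiMap K L η ∧ ∀ γ : Γ, ∀ v ∈ K.verts, η (a γ v) = (b γ) '' (η v)

/-- Pointwise order on multi-maps out of `K` (on the vertices of `K`). -/
def mmLE {V W : Type*} (K : Cplx V) (η η' : V → Set W) : Prop := ∀ v ∈ K.verts, η v ⊆ η' v

/-- An element of `Def_Γ(K, L)`: a Γ-equivariant simplicial multi-map `K → K` with
`η v = {v}` for every vertex `v` of the subcomplex `L`. -/
def IsDefMultiMap (Γ : Type*) [Group Γ] {V : Type*} (a : Γ → V → V) (K L : Cplx V)
    (η : V → Set V) : Prop :=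
  IsEquivMultiMap Γ a a K K η ∧ ∀ v ∈ L.verts, η v = {v}

/-- One step of a zigzag in `Def_Γ(K, L)`: both multi-maps lie in `Def_Γ(K, L)` and they are
comparable. -/
def cplxDefStep (Γ : Type*) [Group Γ] {V : Type*} (a : Γ → V → V) (K L : Cplx V)
    (η η' : V → Set V) : Prop :=
  IsDefMultiMap Γ a K L η ∧ IsDefMultiMap Γ a K L η' ∧ (mmLE K η η' ∨ mmLE K η' η)

/-- The Γ-simplicial complex `K` strongly Γ-collapses to its Γ-subcomplex `L`: there is a
simplicial map `f` belonging to the identity component of `Def_Γ(K, L)` (joined to the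
identity by a finite zigzag of pairwise comparable elements) whose image is contained in
`L`. -/
def CplxCollapses (Γ : Type*) [Group Γ] {V : Type*} (a : Γ → V → V) (K L : Cplx V) : Prop :=
  ∃ f : V → V, IsDefMultiMap Γ a K L (fun v => {f v}) ∧
    Relation.ReflTransGen (cplxDefStep Γ a K L) (fun v => {v}) (fun v => {f v}) ∧
    ∀ σ ∈ K.faces, f '' σ ∈ L.faces
/-- The face poset of `K`, realized as the set of nonempty simplices of `K` inside the poset
`Set V` (ordered by inclusion). -/
def facePoset {V : Type*} (K : Cplx V) : Set (Set V) := {σ | σ ∈ K.faces ∧ σ.Nonempty}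

/-- The barycentric subdivision `Sd(K) = Δ(FK)`: the simplicial complex on the nonempty
simplices of `K` whose simplices are the finite chains of the face poset of `K`. -/
def sd {V : Type*} (K : Cplx V) : Cplx (Set V) where
  faces := {c | c.Finite ∧ (∀ σ ∈ c, σ ∈ facePoset K) ∧ IsChain (· ⊆ ·) c}
  finite_mem := fun _ h => h.1
  down_closed := fun c hc d hdc =>
    ⟨hc.1.subset hdc, fun σ hσ => hc.2.1 σ (hdc hσ),
      by exact hc.2.2.mono hdc⟩

/-- An element of `Def_Γ(A, Q)` for the Γ-poset structure on `P` given by the explicit action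
`a`: an order-preserving Γ-equivariant self-map of the induced subposet `A` fixing `Q`
pointwise. -/
def IsDefPosetMapA (Γ : Type*) [Group Γ] {P : Type*} [PartialOrder P] (a : Γ → P → P)
    (A Q : Set P) (f : P → P) : Prop :=
  Set.MapsTo f A A ∧ (∀ x ∈ A, ∀ y ∈ A, x ≤ y → f x ≤ f y) ∧
    (∀ γ : Γ, ∀ x ∈ A, f (a γ x) = a γ (f x)) ∧ ∀ y ∈ Q, f y = y

/-- One step of a zigzag in `Def_Γ(A, Q)`. -/
def posetDefStepA (Γ : Type*) [Group Γ] {P : Type*} [PartialOrder P] (a : Γ → P → P)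
    (A Q : Set P) (f g : P → P) : Prop :=
  IsDefPosetMapA Γ a A Q f ∧ IsDefPosetMapA Γ a A Q g ∧
    ((∀ x ∈ A, f x ≤ g x) ∨ (∀ x ∈ A, g x ≤ f x))

/-- The induced Γ-subposet `A` strongly Γ-collapses to `Q ⊆ A`: some `f ∈ Def_Γ(A, Q)` in the
identity component of `Def_Γ(A, Q)` has image (on `A`) contained in `Q`. -/
def PosetCollapsesOnA (Γ : Type*) [Group Γ] {P : Type*} [PartialOrder P] (a : Γ → P → P)
    (A Q : Set P) : Prop :=
  ∃ f : P → P, IsDefPosetMapA Γ a A Q f ∧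
    Relation.ReflTransGen (posetDefStepA Γ a A Q) id f ∧ ∀ x ∈ A, f x ∈ Q

/-! A multi-map `η` acts on simplices by `σ ↦ ⋃ v ∈ σ, η v`. This sends `Def_Γ(K, L)` into
`Def_Γ(FK, FL)` and comparable pairs to comparable pairs, hence zigzags to zigzags; it sends the
identity to the identity and a simplicial map `f` with image in `L` to `σ ↦ f '' σ`, whose image
lies in `FL`. -/

def faceMap {V W : Type*} (η : V → Set W) (σ : Set V) : Set W := ⋃ v ∈ σ, η v

section faceMap

variable {Γ V W : Type*}

lemma Cplx.mem_verts_of_mem {K : Cplx V} {σ : Set V} (hσ : σ ∈ K.faces) {v : V}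
    (hv : v ∈ σ) : v ∈ K.verts :=
  K.down_closed σ hσ {v} (Set.singleton_subset_iff.mpr hv)

lemma faceMap_singleton : faceMap (fun v : V => {v}) = id :=
  funext Set.biUnion_of_singleton

lemma faceMap_singleton_comp (f : V → W) (σ : Set V) : faceMap (fun v => {f v}) σ = f '' σ :=
  (Set.image_eq_iUnion f σ).symm

lemma faceMap_mono {η : V → Set W} {σ τ : Set V} (h : σ ⊆ τ) : faceMap η σ ⊆ faceMap η τ :=
  Set.biUnion_subset_biUnion_left h

lemma faceMap_le_faceMap {K : Cplx V} {η η' : V → Set W} (h : mmLE K η η') {σ : Set V}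
    (hσ : σ ∈ K.faces) : faceMap η σ ⊆ faceMap η' σ :=
  Set.iUnion₂_mono fun _ hv => h _ (K.mem_verts_of_mem hσ hv)

lemma IsMultiMap.mapsTo_facePoset {K : Cplx V} {L : Cplx W} {η : V → Set W}
    (hη : IsMultiMap K L η) : Set.MapsTo (faceMap η) (facePoset K) (facePoset L) := by
  rintro σ ⟨hσ, v, hv⟩
  obtain ⟨w, hw⟩ := hη.1 v (K.mem_verts_of_mem hσ hv)
  exact ⟨hη.2 σ hσ, w, Set.mem_biUnion hv hw⟩

lemma IsEquivMultiMap.faceMap_image [Group Γ] {a : Γ → V → V} {b : Γ → W → W}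
    {K : Cplx V} {L : Cplx W} {η : V → Set W} (hη : IsEquivMultiMap Γ a b K L η) (γ : Γ)
    {σ : Set V} (hσ : σ ∈ K.faces) : faceMap η (a γ '' σ) = b γ '' faceMap η σ := by
  rw [faceMap, faceMap, Set.biUnion_image, Set.image_iUnion₂]
  exact Set.iUnion₂_congr fun v hv => hη.2 γ v (K.mem_verts_of_mem hσ hv)

lemma faceMap_eq_self {K : Cplx V} {η : V → Set V} (hη : ∀ v ∈ K.verts, η v = {v})
    {σ : Set V} (hσ : σ ∈ K.faces) : faceMap η σ = σ := by
  calc faceMap η σ = ⋃ v ∈ σ, {v} :=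
        Set.iUnion₂_congr fun v hv => hη v (K.mem_verts_of_mem hσ hv)
    _ = σ := Set.biUnion_of_singleton σ

variable [Group Γ] {a : Γ → V → V} {K L : Cplx V}

lemma IsDefMultiMap.isDefPosetMapA_faceMap {η : V → Set V} (hη : IsDefMultiMap Γ a K L η) :
    IsDefPosetMapA Γ (fun γ σ => a γ '' σ) (facePoset K) (facePoset L) (faceMap η) :=
  ⟨hη.1.1.mapsTo_facePoset, fun _ _ _ _ => faceMap_mono,
    fun γ _ hσ => hη.1.faceMap_image γ hσ.1, fun _ hσ => faceMap_eq_self hη.2 hσ.1⟩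

lemma posetDefStepA_faceMap {η η' : V → Set V} (h : cplxDefStep Γ a K L η η') :
    posetDefStepA Γ (fun γ σ => a γ '' σ) (facePoset K) (facePoset L)
      (faceMap η) (faceMap η') := by
  obtain ⟨hη, hη', hle | hge⟩ := h
  · exact ⟨hη.isDefPosetMapA_faceMap, hη'.isDefPosetMapA_faceMap,
      Or.inl fun _ hσ => faceMap_le_faceMap hle hσ.1⟩
  · exact ⟨hη.isDefPosetMapA_faceMap, hη'.isDefPosetMapA_faceMap,
      Or.inr fun _ hσ => faceMap_le_faceMap hge hσ.1⟩

end faceMap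

theorem facePoset_collapses_of_cplxCollapses_general {Γ V : Type*} [Group Γ]
    (a : Γ → V → V) (K L : Cplx V)
    (h : CplxCollapses Γ a K L) :
    PosetCollapsesOnA Γ (fun γ (σ : Set V) => (a γ) '' σ) (facePoset K) (facePoset L) := by
  obtain ⟨f, hf, hzig, himg⟩ := h
  refine ⟨faceMap fun v => {f v}, hf.isDefPosetMapA_faceMap, ?_, ?_⟩
  · rw [← faceMap_singleton]
    exact hzig.lift faceMap fun _ _ => posetDefStepA_faceMap
  · rintro σ ⟨hσ, hne⟩
    rw [faceMap_singleton_comp]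
    exact ⟨himg σ hσ, hne.image f⟩

/-- Let Γ be a finite group, K a Γ-simplicial complex and L an induced
Γ-subcomplex of K.  If K strongly Γ-collapses to L, then the face poset FK strongly
Γ-collapses to FL. -/
theorem facePoset_collapses_of_cplxCollapses {Γ V : Type*} [Group Γ] [Finite Γ]
    (a : Γ → V → V) (K L : Cplx V) (ha : IsCplxAction Γ a K)
    (haL : ∀ γ : Γ, ∀ σ ∈ L.faces, (a γ) '' σ ∈ L.faces)
    (hLK : L.faces ⊆ K.faces)
    (hind : ∀ σ ∈ K.faces, σ ⊆ L.verts → σ ∈ L.faces)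
    (h : CplxCollapses Γ a K L) :
    PosetCollapsesOnA Γ (fun γ (σ : Set V) => (a γ) '' σ) (facePoset K) (facePoset L) :=
  facePoset_collapses_of_cplxCollapses_general a K L h
end

section
/- Let Γ be a finite group, K a finite Γ-simplicial complex and L a Γ-subcomplex of K. If K strongly Γ-collapses to L, then the barycentric subdivision Sd(K) strongly Γ-collapses to Sd(L). -/
/-!
A multi-map `η ∈ Def_Γ(K, L)` induces `Sd(η) : σ ↦ {⋃ v ∈ σ, η v}` in `Def_Γ(Sd K, Sd L)`, and a
comparable pair `η ≤ η'` has to be connected by a zigzag in `Def_Γ(Sd K, Sd L)`. The pointwise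
union `σ ↦ {η σ, η' σ}` is not simplicial, as `η' σ` and `η τ` need not be comparable for
`σ ⊂ τ`. Instead, let `ν_k` use `η` on simplices with at most `k` vertices and `η'` on the
others, and let `μ_k` use both on simplices with exactly `k` vertices. Then `ν_{k-1} ≤ μ_k ≥ ν_k`,
and `μ_k` is simplicial because distinct simplices of a chain have different numbers of
vertices. Going down from `k = |V(K)|` to `k = 0` connects `Sd(η)` to `Sd(η')`.
-/

namespace Cplx

variable {V : Type*} {K : Cplx V}

theorem mem_verts_of_mem_s8 {σ : Set V} (hσ : σ ∈ K.faces) {v : V} (hv : v ∈ σ) : v ∈ K.verts :=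
  K.down_closed σ hσ {v} (Set.singleton_subset_iff.2 hv)

theorem subset_verts {σ : Set V} (hσ : σ ∈ K.faces) : σ ⊆ K.verts :=
  fun _ => mem_verts_of_mem_s8 hσ

theorem verts_sd (K : Cplx V) : (sd K).verts = facePoset K := by
  ext σ
  refine ⟨fun ⟨_, h, _⟩ => h σ rfl, fun h => ⟨Set.finite_singleton σ, ?_, ?_⟩⟩
  · simpa using h
  · exact Set.subsingleton_singleton.isChain

theorem ncard_le_ncard_verts (hfin : K.verts.Finite) {σ : Set V} (hσ : σ ∈ K.faces) :
    σ.ncard ≤ K.verts.ncard :=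
  Set.ncard_le_ncard (subset_verts hσ) hfin

end Cplx

open Cplx

theorem IsCplxAction.injective {Γ V : Type*} [Group Γ] {a : Γ → V → V} {K : Cplx V}
    (ha : IsCplxAction Γ a K) (γ : Γ) : Function.Injective (a γ) :=
  Function.LeftInverse.injective (g := a γ⁻¹) fun v => by rw [← ha.2.1, inv_mul_cancel, ha.1]

theorem image_mem_sd_faces {V W : Type*} {K : Cplx V} {L : Cplx W} {f : V → W}
    (hf : ∀ σ ∈ K.faces, f '' σ ∈ L.faces) {c : Set (Set V)} (hc : c ∈ (sd K).faces) :
    (f '' ·) '' c ∈ (sd L).faces := by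
  obtain ⟨hcfin, hcK, hchain⟩ := hc
  refine ⟨hcfin.image _, ?_, ?_⟩
  · rintro _ ⟨σ, hσ, rfl⟩
    exact ⟨hf σ (hcK σ hσ).1, (hcK σ hσ).2.image f⟩
  · rintro _ ⟨σ, hσ, rfl⟩ _ ⟨τ, hτ, rfl⟩ -
    exact (hchain.total hσ hτ).imp (Set.image_mono ·) (Set.image_mono ·)

section MultiMapImage

variable {V W : Type*} {η η' : V → Set W} {σ τ : Set V}

def mmImage (η : V → Set W) (σ : Set V) : Set W := ⋃ v ∈ σ, η v

theorem mmImage_mono (h : σ ⊆ τ) : mmImage η σ ⊆ mmImage η τ :=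
  Set.biUnion_subset_biUnion_left h

theorem mmImage_subset_mmImage {K : Cplx V} (hle : mmLE K η η') (hσ : σ ∈ K.faces) :
    mmImage η σ ⊆ mmImage η' σ :=
  Set.iUnion₂_mono fun v hv => hle v (mem_verts_of_mem_s8 hσ hv)

theorem mmImage_singleton (f : V → W) (σ : Set V) : mmImage (fun v => {f v}) σ = f '' σ := by
  simp [mmImage, Set.image_eq_iUnion]

theorem mmImage_singleton_self (σ : Set V) : mmImage (fun v => {v}) σ = σ :=
  Set.biUnion_of_singleton σ

theorem mmImage_eq_self {η : V → Set V} {s : Set V} (hfix : ∀ v ∈ s, η v = {v})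
    (hσ : σ ⊆ s) : mmImage η σ = σ := by
  conv_rhs => rw [← mmImage_singleton_self σ]
  exact Set.iUnion₂_congr fun v hv => hfix v (hσ hv)

theorem mmImage_image {a : V → V} {b : W → W} {s : Set V}
    (heq : ∀ v ∈ s, η (a v) = b '' η v) (hσ : σ ⊆ s) :
    mmImage η (a '' σ) = b '' mmImage η σ := by
  rw [mmImage, mmImage, Set.biUnion_image, Set.image_iUnion₂]
  exact Set.iUnion₂_congr fun v hv => heq v (hσ hv)

theorem IsMultiMap.mmImage_mem_facePoset {K : Cplx V} {L : Cplx W} (hη : IsMultiMap K L η)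
    (hσ : σ ∈ facePoset K) : mmImage η σ ∈ facePoset L := by
  obtain ⟨v, hv⟩ := hσ.2
  obtain ⟨w, hw⟩ := hη.1 v (mem_verts_of_mem_s8 hσ.1 hv)
  exact ⟨hη.2 σ hσ.1, w, Set.mem_biUnion hv hw⟩

end MultiMapImage

section Subdivision

variable {V W : Type*} {η η' : V → Set W} {σ τ : Set V} {k l : ℕ}

def sdMap (η : V → Set W) (σ : Set V) : Set (Set W) := {mmImage η σ}

/-- `ν_k = sdMix η η' k (k + 1)` and `μ_k = sdMix η η' k k`. -/
def sdMix (η η' : V → Set W) (k l : ℕ) (σ : Set V) : Set (Set W) :=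
  {x | σ.ncard ≤ k ∧ x = mmImage η σ ∨ l ≤ σ.ncard ∧ x = mmImage η' σ}

theorem sdMix_mono {k' l' : ℕ} (hk : k ≤ k') (hl : l' ≤ l) :
    sdMix η η' k l σ ⊆ sdMix η η' k' l' σ := by
  rintro x (⟨hσ, rfl⟩ | ⟨hσ, rfl⟩)
  exacts [Or.inl ⟨hσ.trans hk, rfl⟩, Or.inr ⟨hl.trans hσ, rfl⟩]

theorem sdMix_eq_sdMap_left (hk : σ.ncard ≤ k) (hl : σ.ncard < l) :
    sdMix η η' k l σ = sdMap η σ := by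
  ext x
  simp [sdMix, sdMap, hk, hl.not_ge]

theorem sdMix_eq_sdMap_right (hk : k < σ.ncard) (hl : l ≤ σ.ncard) :
    sdMix η η' k l σ = sdMap η' σ := by
  ext x
  simp [sdMix, sdMap, hk.not_ge, hl]

theorem sdMix_self : sdMix η η 0 0 = sdMap η := by
  ext σ x
  simp only [sdMix, sdMap, Set.mem_ofPred_eq, Set.mem_singleton_iff, zero_le, true_and]
  tauto

theorem sdMix_nonempty (hlk : l ≤ k + 1) : (sdMix η η' k l σ).Nonempty := by
  rcases le_or_gt σ.ncard k with hk | hk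
  exacts [⟨_, Or.inl ⟨hk, rfl⟩⟩, ⟨_, Or.inr ⟨hlk.trans hk, rfl⟩⟩]

theorem sdMix_eq_singleton {η η' : V → Set V} (hη : mmImage η σ = σ) (hη' : mmImage η' σ = σ)
    (hlk : l ≤ k + 1) : sdMix η η' k l σ = {σ} := by
  refine (sdMix_nonempty hlk).subset_singleton_iff.1 ?_
  rintro x (⟨-, rfl⟩ | ⟨-, rfl⟩)
  exacts [hη, hη']

theorem sdMix_image {a : V → V} {b : W → W} (ha : Function.Injective a) {s : Set V}
    (heq : ∀ v ∈ s, η (a v) = b '' η v) (heq' : ∀ v ∈ s, η' (a v) = b '' η' v) (hσ : σ ⊆ s) :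
    sdMix η η' k l (a '' σ) = (b '' ·) '' sdMix η η' k l σ := by
  ext x
  simp only [sdMix, Set.ncard_image_of_injective σ ha, mmImage_image heq hσ,
    mmImage_image heq' hσ, Set.mem_ofPred_eq, Set.mem_image]
  constructor
  · rintro (⟨hk, rfl⟩ | ⟨hl, rfl⟩)
    exacts [⟨_, Or.inl ⟨hk, rfl⟩, rfl⟩, ⟨_, Or.inr ⟨hl, rfl⟩, rfl⟩]
  · rintro ⟨_, ⟨hk, rfl⟩ | ⟨hl, rfl⟩, rfl⟩
    exacts [Or.inl ⟨hk, rfl⟩, Or.inr ⟨hl, rfl⟩]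

variable {K : Cplx V} {L : Cplx W}

theorem sdMix_comparable (hle : mmLE K η η') (hkl : k ≤ l) (hτ : τ ∈ K.faces) (hστ : σ ⊆ τ)
    {x y : Set W} (hx : x ∈ sdMix η η' k l σ) (hy : y ∈ sdMix η η' k l τ) : x ⊆ y ∨ y ⊆ x := by
  have hσ : σ ∈ K.faces := K.down_closed τ hτ σ hστ
  have hηη' := mmImage_subset_mmImage hle hσ
  rcases hx with ⟨-, rfl⟩ | ⟨hlσ, rfl⟩ <;> rcases hy with ⟨hτk, rfl⟩ | ⟨-, rfl⟩
  · exact Or.inl (mmImage_mono hστ)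
  · exact Or.inl (hηη'.trans (mmImage_mono hστ))
  · -- `l ≤ |σ| ≤ |τ| ≤ k ≤ l` forces `σ = τ`
    have hστ_eq : σ = τ := Set.eq_of_subset_of_ncard_le hστ
      (hτk.trans (hkl.trans hlσ)) (K.finite_mem τ hτ)
    subst hστ_eq
    exact Or.inr hηη'
  · exact Or.inl (mmImage_mono hστ)

theorem isChain_biUnion_sdMix (hle : mmLE K η η') (hkl : k ≤ l) {c : Set (Set V)}
    (hc : c ∈ (sd K).faces) : IsChain (· ⊆ ·) (⋃ σ ∈ c, sdMix η η' k l σ) := by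
  rintro x hx y hy -
  obtain ⟨σ, hσ, hxσ⟩ := Set.mem_iUnion₂.1 hx
  obtain ⟨τ, hτ, hyτ⟩ := Set.mem_iUnion₂.1 hy
  rcases hc.2.2.total hσ hτ with hστ | hτσ
  · exact sdMix_comparable hle hkl (hc.2.1 τ hτ).1 hστ hxσ hyτ
  · exact (sdMix_comparable hle hkl (hc.2.1 σ hσ).1 hτσ hyτ hxσ).symm

theorem IsMultiMap.sdMix (hη : IsMultiMap K L η) (hη' : IsMultiMap K L η')
    (hle : mmLE K η η') (hkl : k ≤ l) (hlk : l ≤ k + 1) :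
    IsMultiMap (sd K) (sd L) (sdMix η η' k l) := by
  refine ⟨fun _ _ => sdMix_nonempty hlk, fun c hc => ⟨?_, ?_, isChain_biUnion_sdMix hle hkl hc⟩⟩
  · refine ((hc.1.image (mmImage η)).union (hc.1.image (mmImage η'))).subset ?_
    simp only [Set.iUnion₂_subset_iff]
    rintro σ hσ x (⟨-, rfl⟩ | ⟨-, rfl⟩)
    exacts [Or.inl ⟨σ, hσ, rfl⟩, Or.inr ⟨σ, hσ, rfl⟩]
  · simp only [Set.mem_iUnion₂]
    rintro x ⟨σ, hσ, ⟨-, rfl⟩ | ⟨-, rfl⟩⟩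
    exacts [hη.mmImage_mem_facePoset (hc.2.1 σ hσ), hη'.mmImage_mem_facePoset (hc.2.1 σ hσ)]

end Subdivision

section Equivariant

variable {Γ V : Type*} [Group Γ] {a : Γ → V → V} {K L : Cplx V} {η η' : V → Set V}

theorem cplxDefStep.symm (h : cplxDefStep Γ a K L η η') :
    cplxDefStep Γ a K L η' η :=
  ⟨h.2.1, h.1, h.2.2.symm⟩

theorem cplxDefStep_of_eqOn (hη : IsDefMultiMap Γ a K L η) (hη' : IsDefMultiMap Γ a K L η')
    (heq : Set.EqOn η η' K.verts) : cplxDefStep Γ a K L η η' :=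
  ⟨hη, hη', Or.inl fun _ hv => (heq hv).le⟩

theorem IsDefMultiMap.sdMix (ha : IsCplxAction Γ a K) (hη : IsDefMultiMap Γ a K L η)
    (hη' : IsDefMultiMap Γ a K L η') (hle : mmLE K η η') {k l : ℕ} (hkl : k ≤ l)
    (hlk : l ≤ k + 1) :
    IsDefMultiMap Γ (fun γ σ => a γ '' σ) (sd K) (sd L) (sdMix η η' k l) := by
  refine ⟨⟨hη.1.1.sdMix hη'.1.1 hle hkl hlk, fun γ σ hσ => ?_⟩, fun σ hσ => ?_⟩
  · rw [verts_sd] at hσ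
    exact sdMix_image (ha.injective γ) (hη.1.2 γ) (hη'.1.2 γ) (subset_verts hσ.1)
  · rw [verts_sd] at hσ
    exact sdMix_eq_singleton (mmImage_eq_self hη.2 (subset_verts hσ.1))
      (mmImage_eq_self hη'.2 (subset_verts hσ.1)) hlk

theorem IsDefMultiMap.sdMap (ha : IsCplxAction Γ a K) (hη : IsDefMultiMap Γ a K L η) :
    IsDefMultiMap Γ (fun γ σ => a γ '' σ) (sd K) (sd L) (sdMap η) :=
  sdMix_self (η := η) ▸ hη.sdMix ha hη (fun _ _ => subset_rfl) le_rfl (Nat.zero_le 1)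

theorem sdMap_reflTransGen_of_mmLE (ha : IsCplxAction Γ a K) (hfin : K.verts.Finite)
    (hη : IsDefMultiMap Γ a K L η) (hη' : IsDefMultiMap Γ a K L η') (hle : mmLE K η η') :
    Relation.ReflTransGen (cplxDefStep Γ (fun γ σ => a γ '' σ) (sd K) (sd L))
      (sdMap η) (sdMap η') := by
  have hmix {k l : ℕ} (hkl : k ≤ l) (hlk : l ≤ k + 1) := hη.sdMix ha hη' hle hkl hlk
  have hdown (k : ℕ) : Relation.ReflTransGen (cplxDefStep Γ (fun γ σ => a γ '' σ) (sd K) (sd L))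
      (sdMix η η' k (k + 1)) (sdMix η η' 0 1) := by
    induction k with
    | zero => exact .refl
    | succ k ih =>
      have hmid := hmix le_rfl (k + 1).le_succ
      refine .head ⟨hmix (k + 1).le_succ le_rfl, hmid, Or.inl fun _ _ => ?_⟩ <|
        .head ⟨hmid, hmix k.le_succ le_rfl, Or.inr fun _ _ => ?_⟩ ih
      exacts [sdMix_mono le_rfl (k + 1).le_succ, sdMix_mono k.le_succ le_rfl]
  have hstart : cplxDefStep Γ (fun γ σ => a γ '' σ) (sd K) (sd L)
      (sdMap η) (sdMix η η' K.verts.ncard (K.verts.ncard + 1)) := by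
    refine cplxDefStep_of_eqOn (hη.sdMap ha) (hmix (Nat.le_succ _) le_rfl) fun σ hσ => ?_
    rw [verts_sd] at hσ
    have hcard := ncard_le_ncard_verts hfin hσ.1
    exact (sdMix_eq_sdMap_left hcard (Nat.lt_succ_of_le hcard)).symm
  have hend : cplxDefStep Γ (fun γ σ => a γ '' σ) (sd K) (sd L) (sdMix η η' 0 1) (sdMap η') := by
    refine cplxDefStep_of_eqOn (hmix zero_le_one le_rfl) (hη'.sdMap ha) fun σ hσ => ?_
    rw [verts_sd] at hσ
    have hpos : 0 < σ.ncard := (Set.ncard_pos (K.finite_mem σ hσ.1)).2 hσ.2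
    exact sdMix_eq_sdMap_right hpos hpos
  exact .head hstart ((hdown _).tail hend)

theorem sdMap_reflTransGen (ha : IsCplxAction Γ a K) (hfin : K.verts.Finite)
    (h : Relation.ReflTransGen (cplxDefStep Γ a K L) η η') :
    Relation.ReflTransGen (cplxDefStep Γ (fun γ σ => a γ '' σ) (sd K) (sd L))
      (sdMap η) (sdMap η') := by
  induction h with
  | refl => exact .refl
  | tail _ hstep ih =>
    obtain ⟨hb, hc, hle | hge⟩ := hstep
    · exact ih.trans (sdMap_reflTransGen_of_mmLE ha hfin hb hc hle)
    · refine ih.trans (Relation.ReflTransGen.mono (fun _ _ h => cplxDefStep.symm h) _ _ ?_)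
      exact Relation.reflTransGen_swap.2 (sdMap_reflTransGen_of_mmLE ha hfin hc hb hge)

end Equivariant

theorem sd_collapses_of_cplxCollapses_general {Γ V : Type*} [Group Γ]
    (a : Γ → V → V) (K L : Cplx V) (ha : IsCplxAction Γ a K)
    (hfin : K.verts.Finite)
    (h : CplxCollapses Γ a K L) :
    CplxCollapses Γ (fun γ (σ : Set V) => (a γ) '' σ) (sd K) (sd L) := by
  obtain ⟨f, hf, hzigzag, hfL⟩ := h
  have hsdf : sdMap (fun v => {f v}) = fun σ => {f '' σ} := funext fun σ => by
    rw [sdMap, mmImage_singleton]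
  have hsdid : sdMap (fun v : V => {v}) = fun σ => {σ} := funext fun σ => by
    rw [sdMap, mmImage_singleton_self]
  refine ⟨(f '' ·), hsdf ▸ hf.sdMap ha, ?_, fun c hc => image_mem_sd_faces hfL hc⟩
  simpa only [hsdf, hsdid] using sdMap_reflTransGen ha hfin hzigzag

/-- Let Γ be a finite group, K a finite Γ-simplicial complex and L a Γ-subcomplex
of K.  If K strongly Γ-collapses to L, then the barycentric subdivision Sd(K) strongly
Γ-collapses to Sd(L). -/
theorem sd_collapses_of_cplxCollapses {Γ V : Type*} [Group Γ] [Finite Γ]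
    (a : Γ → V → V) (K L : Cplx V) (ha : IsCplxAction Γ a K)
    (haL : ∀ γ : Γ, ∀ σ ∈ L.faces, (a γ) '' σ ∈ L.faces)
    (hfin : K.verts.Finite) (hLK : L.faces ⊆ K.faces)
    (h : CplxCollapses Γ a K L) :
    CplxCollapses Γ (fun γ (σ : Set V) => (a γ) '' σ) (sd K) (sd L) :=
  sd_collapses_of_cplxCollapses_general a K L ha hfin h
end

section
/- Let Γ be a finite group, T a right Γ-graph, and (K,L) a pair of Γ-simplicial complexes (L a Γ-subcomplex of K). Then for every integer r ≥ 1, the r-neighborhood ν^r_{A_T(K)}(A_T(L)) is contained in A_T(ν^r_K(L)), both regarded as subgraphs of A_T(K). -/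
/-- The neighborhood `ν_K(L) = ⋃_{v ∈ V(L)} st_K(v)` of the subcomplex `L` in `K`. -/
def nbhd {V : Type*} (K L : Cplx V) : Cplx V where
  faces := {σ | ∃ v ∈ L.verts, insert v σ ∈ K.faces}
  finite_mem := fun σ h => by
    obtain ⟨v, -, h⟩ := h
    exact (K.finite_mem _ h).subset (Set.subset_insert _ _)
  down_closed := fun σ h τ hτσ => by
    obtain ⟨v, hv, h⟩ := h
    exact ⟨v, hv, K.down_closed _ h _ (Set.insert_subset_insert hτσ)⟩

/-- The iterated neighborhood `ν^r_K(L)` (with `ν^0_K(L) = L`). -/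
def nbhdIter {V : Type*} (K L : Cplx V) : ℕ → Cplx V
  | 0 => L
  | r + 1 => nbhd K (nbhdIter K L r)

/-- A graph: a symmetric (loops allowed) adjacency relation on the vertex type `V`. -/
structure LGraph (V : Type*) where
  Adj : V → V → Prop
  symm : ∀ v w, Adj v w → Adj w v

/-- A graph homomorphism from `G` to `H`. -/
def IsGraphHom {V W : Type*} (G : LGraph V) (H : LGraph W) (f : V → W) : Prop :=
  ∀ v w, G.Adj v w → H.Adj (f v) (f w)

/-- A multi-homomorphism from `G` to `H`: it assigns to each vertex of `G` a nonempty set of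
vertices of `H` so that adjacent vertices have completely adjacent images.  The
multi-homomorphisms, ordered pointwise by inclusion, form the Hom complex `Hom(G, H)`. -/
def IsMultiHom {V W : Type*} (G : LGraph V) (H : LGraph W) (η : V → Set W) : Prop :=
  (∀ v, (η v).Nonempty) ∧ ∀ v w, G.Adj v w → ∀ x ∈ η v, ∀ y ∈ η w, H.Adj x y

/-- One step of a zigzag in `Hom(G, H)`: both multi-homomorphisms are comparable. -/
def mhStep {V W : Type*} (G : LGraph V) (H : LGraph W) (η η' : V → Set W) : Prop :=
  IsMultiHom G H η ∧ IsMultiHom G H η' ∧ ((∀ v, η v ⊆ η' v) ∨ (∀ v, η' v ⊆ η v))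

/-- Two graph homomorphisms are ×-homotopic iff they lie in the same connected component of
the Hom complex `Hom(G, H)`. -/
def XHomotopic {V W : Type*} (G : LGraph V) (H : LGraph W) (f g : V → W) : Prop :=
  Relation.ReflTransGen (mhStep G H) (fun v => {f v}) (fun v => {g v})

/-- `f : G → H` is a ×-homotopy equivalence. -/
def IsXHomotopyEquiv {V W : Type*} (G : LGraph V) (H : LGraph W) (f : V → W) : Prop :=
  IsGraphHom G H f ∧ ∃ h : W → V, IsGraphHom H G h ∧
    XHomotopic G G (h ∘ f) id ∧ XHomotopic H H (f ∘ h) id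
/-- A subgraph of `G`: a set of vertices together with a symmetric set of edges of `G`. -/
structure Subgraph {V : Type*} (G : LGraph V) where
  verts : Set V
  Adj : V → V → Prop
  adj_sub : ∀ v w, Adj v w → G.Adj v w
  symm : ∀ v w, Adj v w → Adj w v

/-- Containment of subgraphs of `G`. -/
def Subgraph.le {V : Type*} {G : LGraph V} (H H' : Subgraph G) : Prop :=
  H.verts ⊆ H'.verts ∧ ∀ v w, H.Adj v w → H'.Adj v w

/-- The neighborhood `ν_G(H)` of the subgraph `H` of `G`: its vertices are the vertices of `G`
adjacent to some vertex of `H`, and its edges are the edges of `G` with at least one endpoint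
in `H`. -/
def gnbhd {V : Type*} (G : LGraph V) (H : Subgraph G) : Subgraph G where
  verts := {v | ∃ w ∈ H.verts, G.Adj v w}
  Adj v w := G.Adj v w ∧ (v ∈ H.verts ∨ w ∈ H.verts)
  adj_sub := fun _ _ h => h.1
  symm := fun _ _ h => ⟨G.symm _ _ h.1, h.2.symm⟩

/-- The iterated neighborhood `ν^r_G(H)` (with `ν^0_G(H) = H`). -/
def gnbhdIter {V : Type*} (G : LGraph V) (H : Subgraph G) : ℕ → Subgraph G
  | 0 => H
  | r + 1 => gnbhd G (gnbhdIter G H r)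
/-- `ρ` is a right action of the group `Γ` on the graph `T` by graph automorphisms. -/
def IsRightGraphAction (Γ : Type*) [Group Γ] {VT : Type*} (T : LGraph VT)
    (ρ : Γ → VT → VT) : Prop :=
  (∀ x, ρ 1 x = x) ∧ (∀ γ γ' : Γ, ∀ x, ρ (γ * γ') x = ρ γ' (ρ γ x)) ∧
    ∀ γ : Γ, IsGraphHom T T (ρ γ)

/-- The orbit relation generating the quotient `Γ\(T × A(K))`: `γ·(x, v) = (xγ⁻¹, γv)`. -/
def ATrel {Γ VT VK : Type*} [Group Γ] (ρ : Γ → VT → VT) (a : Γ → VK → VK)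
    (p q : VT × VK) : Prop :=
  ∃ γ : Γ, q = (ρ γ⁻¹ p.1, a γ p.2)

/-- The graph `A_T(K) = Γ\(T × A(K))`: the vertices are the Γ-orbits of pairs of a vertex of
`T` and a vertex of `K`, and two orbits are adjacent iff they contain adjacent
representatives, a pair `(x, v)`, `(y, w)` being adjacent in `T × A(K)` iff `x`, `y` are
adjacent in `T` and `{v, w}` is a simplex of `K`. -/
def ATgraph {Γ VT VK : Type*} [Group Γ] (T : LGraph VT) (ρ : Γ → VT → VT)
    (K : Cplx VK) (a : Γ → VK → VK) : LGraph (Quot (ATrel ρ a)) where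
  Adj c d := ∃ p q : VT × VK, Quot.mk (ATrel ρ a) p = c ∧ Quot.mk (ATrel ρ a) q = d ∧
    T.Adj p.1 q.1 ∧ ({p.2, q.2} : Set VK) ∈ K.faces
  symm := by
    rintro c d ⟨p, q, hp, hq, hT, hK⟩
    exact ⟨q, p, hq, hp, T.symm _ _ hT, by rwa [Set.pair_comm]⟩

/-- The vertex set of `A_T(L)` inside `A_T(K)` (for a subcomplex `L` of `K`): the orbits of
pairs whose second component is a vertex of `L`. -/
def ATverts {Γ VT VK : Type*} [Group Γ] (ρ : Γ → VT → VT) (a : Γ → VK → VK)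
    (L : Cplx VK) : Set (Quot (ATrel ρ a)) :=
  {c | ∃ p : VT × VK, Quot.mk (ATrel ρ a) p = c ∧ p.2 ∈ L.verts}
theorem nbhdIter_faces_subset {V : Type*} {K L : Cplx V} (hLK : L.faces ⊆ K.faces) :
    ∀ r : ℕ, (nbhdIter K L r).faces ⊆ K.faces
  | 0 => hLK
  | r + 1 => fun σ hσ => by
      obtain ⟨v, -, h⟩ := hσ
      exact K.down_closed _ h _ (Set.subset_insert _ _)

/-- For a subcomplex `L` of `K`, the graph `A_T(L)` regarded as a subgraph of `A_T(K)`. -/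
def ATsubgraph {Γ VT VK : Type*} [Group Γ] (T : LGraph VT) (ρ : Γ → VT → VT)
    (K : Cplx VK) (a : Γ → VK → VK) (L : Cplx VK) (hLK : L.faces ⊆ K.faces) :
    Subgraph (ATgraph T ρ K a) where
  verts := ATverts ρ a L
  Adj c d := ∃ p q : VT × VK, Quot.mk (ATrel ρ a) p = c ∧ Quot.mk (ATrel ρ a) q = d ∧
    T.Adj p.1 q.1 ∧ ({p.2, q.2} : Set VK) ∈ L.faces
  adj_sub := by
    rintro c d ⟨p, q, hp, hq, hT, hL⟩
    exact ⟨p, q, hp, hq, hT, hLK hL⟩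
  symm := by
    rintro c d ⟨p, q, hp, hq, hT, hL⟩
    exact ⟨q, p, hq, hp, T.symm _ _ hT, by rwa [Set.pair_comm]⟩

/-! A vertex of `A_T(K)` lies in `A_T(M)` for one representative iff for all, as soon as `M` is
Γ-invariant. Hence an edge of `A_T(K)` meeting `A_T(M)` has a representative `(x, v)`, `(y, w)`
with `{v, w} ∈ K` and `v ∈ M` or `w ∈ M`, so that `{v, w}` lies in the star of a vertex of `M`:
this gives `ν(A_T(M)) ≤ A_T(ν M)`. Since `ν` is monotone and `ν^r L` is again Γ-invariant, the
theorem follows by induction on `r`. -/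

theorem Subgraph.le_refl {V : Type*} {G : LGraph V} (H : Subgraph G) : H.le H :=
  ⟨subset_rfl, fun _ _ h => h⟩

theorem Subgraph.le.trans {V : Type*} {G : LGraph V} {A B C : Subgraph G}
    (hAB : A.le B) (hBC : B.le C) : A.le C :=
  ⟨hAB.1.trans hBC.1, fun v w h => hBC.2 v w (hAB.2 v w h)⟩

theorem gnbhd_mono {V : Type*} {G : LGraph V} {H H' : Subgraph G} (h : H.le H') :
    (gnbhd G H).le (gnbhd G H') :=
  ⟨fun _ ⟨w, hw, hadj⟩ => ⟨w, h.1 hw, hadj⟩,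
    fun _ _ ⟨hadj, hmem⟩ => ⟨hadj, hmem.imp (fun hv => h.1 hv) (fun hw => h.1 hw)⟩⟩

section Invariance

variable {Γ V : Type*}

def Cplx.IsInvariant (a : Γ → V → V) (M : Cplx V) : Prop :=
  ∀ γ : Γ, ∀ σ ∈ M.faces, (a γ) '' σ ∈ M.faces

theorem Cplx.IsInvariant.apply_mem_verts {a : Γ → V → V} {M : Cplx V} (hM : M.IsInvariant a)
    (γ : Γ) {v : V} (hv : v ∈ M.verts) : a γ v ∈ M.verts := by
  simpa [Cplx.verts] using hM γ {v} hv

theorem Cplx.IsInvariant.nbhd {a : Γ → V → V} {K M : Cplx V} (hK : K.IsInvariant a)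
    (hM : M.IsInvariant a) : (nbhd K M).IsInvariant a := by
  rintro γ σ ⟨v, hv, h⟩
  exact ⟨a γ v, hM.apply_mem_verts γ hv, Set.image_insert_eq ▸ hK γ _ h⟩

theorem Cplx.IsInvariant.nbhdIter {a : Γ → V → V} {K L : Cplx V} (hK : K.IsInvariant a)
    (hL : L.IsInvariant a) : ∀ r : ℕ, (nbhdIter K L r).IsInvariant a
  | 0 => hL
  | r + 1 => hK.nbhd (hK.nbhdIter hL r)

variable [Group Γ] {a : Γ → V → V} {K : Cplx V}

theorem IsCplxAction.isInvariant (ha : IsCplxAction Γ a K) : K.IsInvariant a := ha.2.2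

theorem IsCplxAction.inv_apply_apply (ha : IsCplxAction Γ a K) (γ : Γ) (v : V) :
    a γ⁻¹ (a γ v) = v := by
  rw [← ha.2.1, inv_mul_cancel, ha.1]

end Invariance

theorem nbhd_faces_subset {V : Type*} (K M : Cplx V) : (nbhd K M).faces ⊆ K.faces :=
  fun _ ⟨_, _, h⟩ => K.down_closed _ h _ (Set.subset_insert _ _)

theorem pair_mem_nbhd_of_mem_verts {V : Type*} {K M : Cplx V} {v w : V}
    (hvw : ({v, w} : Set V) ∈ K.faces) (hv : v ∈ M.verts) :
    ({v, w} : Set V) ∈ (nbhd K M).faces :=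
  ⟨v, hv, by rwa [Set.insert_eq_of_mem (Set.mem_insert v {w})]⟩

theorem mem_nbhd_verts_of_pair_mem {V : Type*} {K M : Cplx V} {v w : V}
    (hvw : ({v, w} : Set V) ∈ K.faces) (hw : w ∈ M.verts) : v ∈ (nbhd K M).verts :=
  ⟨w, hw, by rwa [Set.pair_comm]⟩

section Orbits

variable {Γ VT VK : Type*} [Group Γ] {ρ : Γ → VT → VT} {a : Γ → VK → VK} {M : Cplx VK}

theorem mem_ATverts_mk_iff (ha : ∀ γ v, a γ⁻¹ (a γ v) = v) (hM : M.IsInvariant a)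
    (p : VT × VK) : Quot.mk (ATrel ρ a) p ∈ ATverts ρ a M ↔ p.2 ∈ M.verts := by
  let inM : Quot (ATrel ρ a) → Prop := Quot.lift (fun p => p.2 ∈ M.verts) <| by
    rintro p _ ⟨γ, rfl⟩
    exact propext ⟨hM.apply_mem_verts γ, fun h => ha γ p.2 ▸ hM.apply_mem_verts γ⁻¹ h⟩
  refine ⟨fun ⟨q, hqp, hq⟩ => ?_, fun hp => ⟨p, rfl, hp⟩⟩
  change inM (Quot.mk _ p)
  exact hqp ▸ hq

variable {T : LGraph VT} {K : Cplx VK}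

theorem gnbhd_ATsubgraph_le (ha : ∀ γ v, a γ⁻¹ (a γ v) = v) (hM : M.IsInvariant a)
    (hMK : M.faces ⊆ K.faces) :
    (gnbhd (ATgraph T ρ K a) (ATsubgraph T ρ K a M hMK)).le
      (ATsubgraph T ρ K a (nbhd K M) (nbhd_faces_subset K M)) := by
  have mem_verts {p : VT × VK} {c} (hpc : Quot.mk (ATrel ρ a) p = c) (hc : c ∈ ATverts ρ a M) :
      p.2 ∈ M.verts :=
    (mem_ATverts_mk_iff ha hM p).1 (hpc ▸ hc)
  constructor
  · rintro c ⟨d, hd, p, q, rfl, hqd, -, hpq⟩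
    exact ⟨p, rfl, mem_nbhd_verts_of_pair_mem hpq (mem_verts hqd hd)⟩
  · rintro c d ⟨⟨p, q, hpc, hqd, hT, hpq⟩, hc | hd⟩
    · exact ⟨p, q, hpc, hqd, hT, pair_mem_nbhd_of_mem_verts hpq (mem_verts hpc hc)⟩
    · refine ⟨p, q, hpc, hqd, hT, ?_⟩
      rw [Set.pair_comm] at hpq ⊢
      exact pair_mem_nbhd_of_mem_verts hpq (mem_verts hqd hd)

end Orbits

theorem gnbhdIter_AT_le_general {Γ VT VK : Type*} [Group Γ]
    (T : LGraph VT) (ρ : Γ → VT → VT)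
    (K L : Cplx VK) (a : Γ → VK → VK) (ha : IsCplxAction Γ a K)
    (haL : ∀ γ : Γ, ∀ σ ∈ L.faces, (a γ) '' σ ∈ L.faces) (hLK : L.faces ⊆ K.faces)
    (r : ℕ) :
    Subgraph.le (gnbhdIter (ATgraph T ρ K a) (ATsubgraph T ρ K a L hLK) r)
      (ATsubgraph T ρ K a (nbhdIter K L r) (nbhdIter_faces_subset hLK r)) := by
  induction r with
  | zero => exact Subgraph.le_refl _
  | succ r ih =>
    exact (gnbhd_mono ih).trans
      (gnbhd_ATsubgraph_le ha.inv_apply_apply (ha.isInvariant.nbhdIter haL r) _)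

/-- Let Γ be a finite group, T a right Γ-graph, and (K,L) a pair of
Γ-simplicial complexes.  Then for every r ≥ 1, the r-neighborhood ν^r_{A_T(K)}(A_T(L)) is
contained in A_T(ν^r_K(L)), both regarded as subgraphs of A_T(K). -/
theorem gnbhdIter_AT_le {Γ VT VK : Type*} [Group Γ] [Finite Γ]
    (T : LGraph VT) (ρ : Γ → VT → VT) (hT : IsRightGraphAction Γ T ρ)
    (K L : Cplx VK) (a : Γ → VK → VK) (ha : IsCplxAction Γ a K)
    (haL : ∀ γ : Γ, ∀ σ ∈ L.faces, (a γ) '' σ ∈ L.faces) (hLK : L.faces ⊆ K.faces)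
    (r : ℕ) (hr : 1 ≤ r) :
    Subgraph.le (gnbhdIter (ATgraph T ρ K a) (ATsubgraph T ρ K a L hLK) r)
      (ATsubgraph T ρ K a (nbhdIter K L r) (nbhdIter_faces_subset hLK r)) :=
  gnbhdIter_AT_le_general T ρ K L a ha haL hLK r
end
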